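/- arXiv:2201.13272 — 2 statements merged into one kernel-verified Lean document; each statement's English description precedes it below -/
import Mathlib

section
/- Let constants σ, q, k, γ, β > 0 and λ ∈ [0,1] be given, let T > 0, and let (ξ(t), w(t), h[t], v[t], ζ(t), z(t)) for t ∈ [0,T] be a classical smooth solution (all partial derivatives ∂_t^j ∂_x^i h and ∂_t^j ∂_x^i v with j ≤ 2, i ≤ 4 exist and are continuous on [0,T]×[0,1], and h > 0) of the viscous Saint-Venant liquid-tank system with L = g = h* = m = 1 under the reduced-order observer, the filter, and the feedback f = −σ(2λz + (1−2λ)μ(h(t,1) − h(t,0)) − q(ζ + (γ+k)ξ)). Then there exists a constant M̄ > 0 such that for all sufficiently small δt ∈ (0,T) and δx = 1/n (n ≥ 2 an integer), the one-step values h_i⁺, v_i⁺ (i = 0,…,n), ξ⁺, w⁺, ζ⁺, z⁺ of the finite-difference scheme initialized at the exact solution values at time 0 satisfy |ξ⁺ − ξ(δt)| + |w⁺ − w(δt)| + |z⁺ − z(δt)| + |ζ⁺ − ζ(δt)| + max_{i=0,…,n}(|h_i⁺ − h(δt, iδx)| + |v_i⁺ − v(δt, iδx)|) ≤ M̄ δt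 (δt + δx²). -/
/-!
Every component of the one-step error is a Taylor remainder. In time, each exact quantity obeys
`u(δt) = u(0) + δt u_t(0) + O(δt²)`, uniformly in `x` by compactness of `[0, T] × [0, 1]`. In
space, the centered first and second differences in the interior and the second-order one-sided
difference at the walls, applied to `v`, `h` and `log h`, reproduce the spatial derivatives up to
`O(δx²)`. With the two PDEs at time `0`, the level update becomes `h · exp (δt (h_t / h + O(δx²)))`
and the velocity update `v + δt (v_t + O(δx²))`, and `exp u = 1 + u + O(u²)` for `|u| ≤ 1` gives
the bound `O(δt (δt + δx²))`. The tank, filter and observer updates are second-order Taylor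
steps; the observer step even integrates `ζ - w + γ ξ`, a solution of `e' = -γ e`, exactly.
-/

open Set

/-- The explicit finite-difference update (6.1) of the liquid level. -/
noncomputable def hPlus (δt δx : ℝ) (n : ℕ) (hh vv : ℕ → ℝ) (i : ℕ) : ℝ :=
  if i = 0 then hh 0 * Real.exp (δt / (2 * δx) * (vv 2 - 4 * vv 1))
  else if i = n then hh n * Real.exp (δt / (2 * δx) * (4 * vv (n - 1) - vv (n - 2)))
  else hh i * Real.exp (δt / (2 * δx) * (vv (i - 1) - vv (i + 1))
        + δt / (2 * δx) * vv i * Real.log (hh (i - 1) / hh (i + 1)))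

/-- The explicit finite-difference update (6.2)-(6.3) of the liquid velocity,
with `fd` the applied discrete input. -/
noncomputable def vPlus (δt δx μ fd : ℝ) (n : ℕ) (hh vv : ℕ → ℝ) (i : ℕ) : ℝ :=
  if i = 0 ∨ i = n then 0
  else (1 - 2 * δt * μ / δx ^ 2) * vv i + δt * μ / δx ^ 2 * (vv (i + 1) + vv (i - 1))
    + δt * μ / (4 * δx ^ 2) * (vv (i + 1) - vv (i - 1)) * Real.log (hh (i + 1) / hh (i - 1))
    - δt / (2 * δx) * (vv i * (vv (i + 1) - vv (i - 1)) + hh (i + 1) - hh (i - 1))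
    + fd * δt

theorem abs_sub_le_mul_pow_succ_of_hasDerivWithinAt {F F' : ℝ → ℝ} {s : Set ℝ}
    (hs : Convex ℝ s) (hF : ∀ u ∈ s, HasDerivWithinAt F (F' u) s u) {t₀ y K : ℝ} (k : ℕ)
    (ht₀ : t₀ ∈ s) (hy : y ∈ s) (hK : 0 ≤ K) (hF' : ∀ u ∈ s, |F' u| ≤ K * |u - t₀| ^ k) :
    |F y - F t₀| ≤ K * |y - t₀| ^ (k + 1) := by
  have hsub : uIcc t₀ y ⊆ s := hs.ordConnected.uIcc_subset ht₀ hy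
  have := (convex_uIcc t₀ y).norm_image_sub_le_of_norm_hasDerivWithin_le
    (fun u hu => ((hF u (hsub hu)).mono hsub)) (C := K * |y - t₀| ^ k)
    (fun u hu => (hF' u (hsub hu)).trans <| mul_le_mul_of_nonneg_left
      (pow_le_pow_left₀ (abs_nonneg _) (abs_sub_left_of_mem_uIcc hu) k) hK)
    left_mem_uIcc right_mem_uIcc
  simpa only [Real.norm_eq_abs, pow_succ, mul_assoc] using this

open Finset Nat in
theorem abs_sub_sum_taylor_le {s : Set ℝ} (hs : Convex ℝ s) {t₀ K : ℝ} (ht₀ : t₀ ∈ s)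
    (hK : 0 ≤ K) (n : ℕ) (g : ℕ → ℝ → ℝ)
    (hg : ∀ k < n, ∀ u ∈ s, HasDerivWithinAt (g k) (g (k + 1) u) s u)
    (hgn : ∀ u ∈ s, |g n u| ≤ K) {y : ℝ} (hy : y ∈ s) :
    |g 0 y - ∑ k ∈ range n, (y - t₀) ^ k / k ! * g k t₀| ≤ K * |y - t₀| ^ n := by
  induction n generalizing g y with
  | zero => simpa using hgn y hy
  | succ n ih =>
    have hF : ∀ u ∈ s, HasDerivWithinAt
        (fun u => g 0 u - ∑ k ∈ range n, (u - t₀) ^ (k + 1) / (k + 1) ! * g (k + 1) t₀)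
        (g 1 u - ∑ k ∈ range n, (u - t₀) ^ k / k ! * g (k + 1) t₀) s u := by
      intro u hu
      refine (hg 0 (by omega) u hu).sub (HasDerivWithinAt.fun_sum fun k _ => ?_)
      refine ((((hasDerivWithinAt_id u s).sub_const t₀).pow (k + 1)).div_const
        ((k + 1) ! : ℝ)).mul_const (g (k + 1) t₀) |>.congr_deriv ?_
      simp only [id, Nat.factorial_succ]
      push_cast
      field_simp
    have := abs_sub_le_mul_pow_succ_of_hasDerivWithinAt hs hF n ht₀ hy hK
      fun u hu => ih (fun k => g (k + 1)) (fun k hk => hg (k + 1) (by omega)) hgn hu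
    rw [sum_range_succ']
    simpa [sub_sub] using this

theorem abs_sub_sub_mul_le_of_hasDerivWithinAt {g g' g'' : ℝ → ℝ} {s : Set ℝ} (hs : Convex ℝ s)
    (hg : ∀ u ∈ s, HasDerivWithinAt g (g' u) s u) (hg' : ∀ u ∈ s, HasDerivWithinAt g' (g'' u) s u)
    {K t₀ y : ℝ} (hK : 0 ≤ K) (hg'' : ∀ u ∈ s, |g'' u| ≤ K) (ht₀ : t₀ ∈ s) (hy : y ∈ s) :
    |g y - g t₀ - (y - t₀) * g' t₀| ≤ K * |y - t₀| ^ 2 := by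
  have := abs_sub_sum_taylor_le hs ht₀ hK 2 (fun k => [g, g', g''].getD k 0) (fun k hk => by
    interval_cases k <;> simpa) (by simpa) hy
  simpa [Finset.sum_range_succ, sub_sub] using this

theorem exists_abs_sub_sub_mul_le_sq {g g' g'' : ℝ → ℝ} {T : ℝ}
    (hg : ∀ t ∈ Icc 0 T, HasDerivWithinAt g (g' t) (Icc 0 T) t)
    (hg' : ∀ t ∈ Icc 0 T, HasDerivWithinAt g' (g'' t) (Icc 0 T) t)
    (hg'' : ContinuousOn g'' (Icc 0 T)) :
    ∃ C, 0 ≤ C ∧ ∀ t ∈ Icc 0 T, |g t - g 0 - t * g' 0| ≤ C * t ^ 2 := by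
  obtain ⟨C, hC⟩ := isCompact_Icc.exists_bound_of_continuousOn hg''
  refine ⟨|C|, abs_nonneg C, fun t ht => ?_⟩
  have h0 : (0 : ℝ) ∈ Icc 0 T := ⟨le_rfl, ht.1.trans ht.2⟩
  simpa [abs_of_nonneg ht.1] using abs_sub_sub_mul_le_of_hasDerivWithinAt (convex_Icc 0 T) hg hg'
    (abs_nonneg C) (fun u hu => ((hC u hu).trans (le_abs_self C))) h0 ht

theorem eq_exp_mul_of_hasDerivWithinAt {e : ℝ → ℝ} {c T : ℝ}
    (he : ∀ t ∈ Icc 0 T, HasDerivWithinAt e (c * e t) (Icc 0 T) t) :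
    ∀ t ∈ Icc 0 T, e t = Real.exp (c * t) * e 0 := by
  intro t ht
  have hF : ∀ u ∈ Icc 0 T, HasDerivWithinAt (fun u => e u * Real.exp (-(c * u))) 0 (Icc 0 T) u :=
    fun u hu => ((he u hu).mul ((((hasDerivWithinAt_id u _).const_mul c).neg).exp)).congr_deriv
      (by simp; ring)
  have := abs_sub_le_mul_pow_succ_of_hasDerivWithinAt (convex_Icc 0 T) hF 0
    ⟨le_rfl, ht.1.trans ht.2⟩ ht le_rfl (by simp)
  simp only [zero_mul, abs_nonpos_iff, sub_eq_zero, mul_zero, neg_zero, Real.exp_zero,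
    mul_one] at this
  rw [← this, mul_comm, mul_assoc, ← Real.exp_add]
  simp

theorem IsCompact.exists_forall_abs_le_of_continuousOn {α ι : Type*} [TopologicalSpace α]
    {S : Set α} (hS : IsCompact S) (s : Finset ι) {F : ι → α → ℝ}
    (hF : ∀ a ∈ s, ContinuousOn (F a) S) : ∃ K, 0 ≤ K ∧ ∀ a ∈ s, ∀ p ∈ S, |F a p| ≤ K := by
  choose! K hK using fun a ha => hS.exists_bound_of_continuousOn (hF a ha)
  refine ⟨∑ a ∈ s, |K a|, by positivity, fun a ha p hp => ?_⟩
  exact (hK a ha p hp).trans <| (le_abs_self _).trans <|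
    Finset.single_le_sum (f := fun a => |K a|) (fun _ _ => abs_nonneg _) ha

theorem abs_mul_exp_sub_le {c a r y δt A : ℝ} (hδt : 0 ≤ δt) (ha : |a| ≤ A) (hA : δt * A ≤ 1) :
    |c * Real.exp (δt * a) - y|
      ≤ |c| * (δt * A) ^ 2 + |c| * δt * |a - r| + |y - c - δt * (c * r)| := by
  have hu : |δt * a| ≤ δt * A := by rw [abs_mul, abs_of_nonneg hδt]; gcongr
  calc _ = |c * (Real.exp (δt * a) - 1 - δt * a) + c * δt * (a - r) - (y - c - δt * (c * r))| := by
        congr 1; ring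
    _ ≤ |c * (Real.exp (δt * a) - 1 - δt * a)| + |c * δt * (a - r)| + |y - c - δt * (c * r)| :=
        (abs_sub _ _).trans (add_le_add_left (abs_add_le _ _) _)
    _ ≤ _ := by
        rw [abs_mul, abs_mul, abs_mul, abs_of_nonneg hδt]
        gcongr
        refine (Real.abs_exp_sub_one_sub_id_le (hu.trans hA)).trans ?_
        rw [← sq_abs]
        gcongr

section FiniteDifferences

variable {s : Set ℝ} {K x d : ℝ} {g : ℕ → ℝ → ℝ}

open Finset

theorem abs_centered_diff_sub_le (hs : Convex ℝ s) (hK : 0 ≤ K)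
    (hg : ∀ k < 3, ∀ u ∈ s, HasDerivWithinAt (g k) (g (k + 1) u) s u)
    (hg3 : ∀ u ∈ s, |g 3 u| ≤ K) (hx : x ∈ s) (hp : x + d ∈ s) (hm : x - d ∈ s) :
    |g 0 (x + d) - g 0 (x - d) - 2 * d * g 1 x| ≤ 2 * K * |d| ^ 3 := by
  have tp := abs_sub_sum_taylor_le hs hx hK 3 g hg hg3 hp
  have tm := abs_sub_sum_taylor_le hs hx hK 3 g hg hg3 hm
  simp only [add_sub_cancel_left, sub_sub_cancel_left, abs_neg] at tp tm
  calc _ = |(g 0 (x + d) - ∑ k ∈ range 3, d ^ k / k.factorial * g k x)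
        - (g 0 (x - d) - ∑ k ∈ range 3, (-d) ^ k / k.factorial * g k x)| := by
        congr 1; simp [sum_range_succ, Nat.factorial]; ring
    _ ≤ _ := abs_sub _ _
    _ ≤ _ := by linarith

theorem abs_second_diff_sub_le (hs : Convex ℝ s) (hK : 0 ≤ K)
    (hg : ∀ k < 4, ∀ u ∈ s, HasDerivWithinAt (g k) (g (k + 1) u) s u)
    (hg4 : ∀ u ∈ s, |g 4 u| ≤ K) (hx : x ∈ s) (hp : x + d ∈ s) (hm : x - d ∈ s) :
    |g 0 (x + d) - 2 * g 0 x + g 0 (x - d) - d ^ 2 * g 2 x| ≤ 2 * K * d ^ 4 := by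
  have tp := abs_sub_sum_taylor_le hs hx hK 4 g hg hg4 hp
  have tm := abs_sub_sum_taylor_le hs hx hK 4 g hg hg4 hm
  simp only [add_sub_cancel_left, sub_sub_cancel_left, abs_neg, pow_abs] at tp tm
  calc _ = |(g 0 (x + d) - ∑ k ∈ range 4, d ^ k / k.factorial * g k x)
        + (g 0 (x - d) - ∑ k ∈ range 4, (-d) ^ k / k.factorial * g k x)| := by
        congr 1; simp [sum_range_succ, Nat.factorial]; ring
    _ ≤ _ := abs_add_le _ _
    _ ≤ _ := by rw [abs_of_nonneg (by positivity : 0 ≤ d ^ 4)] at tp tm; linarith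

theorem abs_one_sided_diff_sub_le (hs : Convex ℝ s) (hK : 0 ≤ K)
    (hg : ∀ k < 3, ∀ u ∈ s, HasDerivWithinAt (g k) (g (k + 1) u) s u)
    (hg3 : ∀ u ∈ s, |g 3 u| ≤ K) (hx : x ∈ s) (h1 : x + d ∈ s) (h2 : x + 2 * d ∈ s) :
    |g 0 (x + 2 * d) - 4 * g 0 (x + d) + 3 * g 0 x + 2 * d * g 1 x| ≤ 12 * K * |d| ^ 3 := by
  have t1 := abs_sub_sum_taylor_le hs hx hK 3 g hg hg3 h1
  have t2 := abs_sub_sum_taylor_le hs hx hK 3 g hg hg3 h2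
  simp only [add_sub_cancel_left, abs_mul, abs_two, mul_pow] at t1 t2
  calc _ = |(g 0 (x + 2 * d) - ∑ k ∈ range 3, 2 ^ k * d ^ k / k.factorial * g k x)
        - 4 * (g 0 (x + d) - ∑ k ∈ range 3, d ^ k / k.factorial * g k x)| := by
        congr 1; simp [sum_range_succ, Nat.factorial]; ring
    _ ≤ _ := abs_sub _ _
    _ ≤ _ := by rw [abs_mul, abs_of_pos (four_pos : (0 : ℝ) < 4)]; linarith

end FiniteDifferences

/-- `derivsOfLog H k` is the `k`-th derivative of `log ∘ H 0` when each `H k` is that of `H 0`,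
for `k ≤ 3`. -/
noncomputable def derivsOfLog (H : ℕ → ℝ → ℝ) : ℕ → ℝ → ℝ
  | 0 => fun x => Real.log (H 0 x)
  | 1 => fun x => H 1 x / H 0 x
  | 2 => fun x => H 2 x / H 0 x - (H 1 x / H 0 x) ^ 2
  | _ => fun x => H 3 x / H 0 x - 3 * (H 1 x / H 0 x) * (H 2 x / H 0 x) + 2 * (H 1 x / H 0 x) ^ 3

noncomputable def logDerivBound (K m : ℝ) : ℝ := K / m + 3 * (K / m) ^ 2 + 2 * (K / m) ^ 3

section derivsOfLog

variable {s : Set ℝ} {H : ℕ → ℝ → ℝ}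

theorem hasDerivWithinAt_derivsOfLog
    (hH : ∀ k < 3, ∀ u ∈ s, HasDerivWithinAt (H k) (H (k + 1) u) s u)
    (hH0 : ∀ u ∈ s, H 0 u ≠ 0) :
    ∀ k < 3, ∀ u ∈ s, HasDerivWithinAt (derivsOfLog H k) (derivsOfLog H (k + 1) u) s u := by
  intro k hk u hu
  have hq : ∀ j < 3, HasDerivWithinAt (fun x => H j x / H 0 x)
      ((H (j + 1) u * H 0 u - H j u * H 1 u) / H 0 u ^ 2) s u :=
    fun j hj => (hH j hj u hu).div (hH 0 (by norm_num) u hu) (hH0 u hu)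
  have h0 := hH0 u hu
  interval_cases k
  · exact (hH 0 (by norm_num) u hu).log h0 |>.congr_deriv (by simp [derivsOfLog])
  · exact (hq 1 (by norm_num)).congr_deriv (by simp only [derivsOfLog]; field_simp)
  · refine ((hq 2 (by norm_num)).sub ((hq 1 (by norm_num)).pow 2)).congr_deriv ?_
    simp only [derivsOfLog]
    norm_num
    field_simp
    ring

theorem abs_derivsOfLog_three_le {K m u : ℝ} (hm : 0 < m) (hmH : m ≤ H 0 u)
    (hHK : ∀ k ≤ 3, |H k u| ≤ K) :
    |derivsOfLog H 3 u| ≤ logDerivBound K m := by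
  have hr : ∀ k ≤ 3, |H k u / H 0 u| ≤ K / m := fun k hk => by
    rw [abs_div, abs_of_pos (hm.trans_le hmH)]
    exact div_le_div₀ ((abs_nonneg _).trans (hHK k hk)) (hHK k hk) hm hmH
  have h1 := hr 1 (by norm_num)
  have h2 := hr 2 (by norm_num)
  have h3 := hr 3 le_rfl
  have hR : 0 ≤ K / m := (abs_nonneg _).trans h1
  simp only [derivsOfLog, logDerivBound]
  calc _ ≤ |H 3 u / H 0 u| + 3 * (|H 1 u / H 0 u| * |H 2 u / H 0 u|)
        + 2 * |H 1 u / H 0 u| ^ 3 := by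
        refine (abs_add_le _ _).trans (add_le_add ((abs_sub _ _).trans ?_) ?_) <;>
          simp [abs_mul, abs_pow, mul_assoc]
    _ ≤ _ := by gcongr; nlinarith [abs_nonneg (H 1 u / H 0 u)]

end derivsOfLog

section Grid

variable {n j : ℕ} {δx : ℝ}

theorem pos_of_natCast_mul_eq_one (hnδx : n * δx = 1) : 0 < δx :=
  pos_of_mul_pos_right (hnδx ▸ one_pos) (Nat.cast_nonneg n)

theorem natCast_mul_mem_Icc (hnδx : n * δx = 1) (hj : j ≤ n) : (j : ℝ) * δx ∈ Icc (0 : ℝ) 1 :=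
  ⟨by have := pos_of_natCast_mul_eq_one hnδx; positivity,
    hnδx ▸ mul_le_mul_of_nonneg_right (by exact_mod_cast hj) (pos_of_natCast_mul_eq_one hnδx).le⟩

theorem natCast_sub_one_mul (hj : 0 < j) : ((j - 1 : ℕ) : ℝ) * δx = j * δx - δx := by
  rw [Nat.cast_pred hj, sub_one_mul]

theorem natCast_add_one_mul : ((j + 1 : ℕ) : ℝ) * δx = j * δx + δx := by
  push_cast; ring

end Grid

structure SmoothProfile (H V : ℕ → ℝ → ℝ) (K m : ℝ) : Prop where
  hasDerivWithinAt_H : ∀ k < 3, ∀ x ∈ Icc (0 : ℝ) 1,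
    HasDerivWithinAt (H k) (H (k + 1) x) (Icc 0 1) x
  hasDerivWithinAt_V : ∀ k < 4, ∀ x ∈ Icc (0 : ℝ) 1,
    HasDerivWithinAt (V k) (V (k + 1) x) (Icc 0 1) x
  abs_H_le : ∀ k ≤ 3, ∀ x ∈ Icc (0 : ℝ) 1, |H k x| ≤ K
  abs_V_le : ∀ k ≤ 4, ∀ x ∈ Icc (0 : ℝ) 1, |V k x| ≤ K
  pos : 0 < m
  le_H : ∀ x ∈ Icc (0 : ℝ) 1, m ≤ H 0 x

namespace SmoothProfile

variable {H V : ℕ → ℝ → ℝ} {K m x d : ℝ}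

theorem nonneg (P : SmoothProfile H V K m) : 0 ≤ K :=
  (abs_nonneg _).trans (P.abs_V_le 0 (by norm_num) 0 (by norm_num))

theorem abs_div_le (P : SmoothProfile H V K m) (hx : x ∈ Icc (0 : ℝ) 1) :
    |H 1 x / H 0 x| ≤ K / m := by
  rw [abs_div, abs_of_pos (P.pos.trans_le (P.le_H x hx))]
  exact div_le_div₀ P.nonneg (P.abs_H_le 1 (by norm_num) x hx) P.pos (P.le_H x hx)

theorem abs_rate_le (P : SmoothProfile H V K m) (hx : x ∈ Icc (0 : ℝ) 1) :
    |V 1 x + V 0 x * (H 1 x / H 0 x)| ≤ K + K * (K / m) := by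
  refine (abs_add_le _ _).trans (add_le_add (P.abs_V_le 1 (by norm_num) _ hx) ?_)
  rw [abs_mul]
  exact mul_le_mul (P.abs_V_le 0 (by norm_num) _ hx) (P.abs_div_le hx) (abs_nonneg _) P.nonneg

theorem logDerivBound_nonneg (P : SmoothProfile H V K m) : 0 ≤ logDerivBound K m := by
  have := div_nonneg P.nonneg P.pos.le
  unfold logDerivBound
  positivity

theorem abs_log_centered_diff_sub_le (P : SmoothProfile H V K m) (hx : x ∈ Icc (0 : ℝ) 1)
    (hp : x + d ∈ Icc (0 : ℝ) 1) (hm : x - d ∈ Icc (0 : ℝ) 1) :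
    |Real.log (H 0 (x + d)) - Real.log (H 0 (x - d)) - 2 * d * (H 1 x / H 0 x)|
      ≤ 2 * logDerivBound K m * |d| ^ 3 :=
  abs_centered_diff_sub_le (g := derivsOfLog H) (convex_Icc 0 1) P.logDerivBound_nonneg
    (hasDerivWithinAt_derivsOfLog P.hasDerivWithinAt_H
      fun u hu => (P.pos.trans_le (P.le_H u hu)).ne')
    (fun u hu => abs_derivsOfLog_three_le P.pos (P.le_H u hu) fun k hk => P.abs_H_le k hk u hu)
    hx hp hm

theorem abs_centered_diff_V_sub_le (P : SmoothProfile H V K m) (hx : x ∈ Icc (0 : ℝ) 1)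
    (hp : x + d ∈ Icc (0 : ℝ) 1) (hm : x - d ∈ Icc (0 : ℝ) 1) :
    |V 0 (x + d) - V 0 (x - d) - 2 * d * V 1 x| ≤ 2 * K * |d| ^ 3 :=
  abs_centered_diff_sub_le (convex_Icc 0 1) P.nonneg
    (fun k hk => P.hasDerivWithinAt_V k (by omega)) (P.abs_V_le 3 (by norm_num)) hx hp hm

theorem abs_centered_diff_H_sub_le (P : SmoothProfile H V K m) (hx : x ∈ Icc (0 : ℝ) 1)
    (hp : x + d ∈ Icc (0 : ℝ) 1) (hm : x - d ∈ Icc (0 : ℝ) 1) :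
    |H 0 (x + d) - H 0 (x - d) - 2 * d * H 1 x| ≤ 2 * K * |d| ^ 3 :=
  abs_centered_diff_sub_le (convex_Icc 0 1) P.nonneg P.hasDerivWithinAt_H
    (P.abs_H_le 3 le_rfl) hx hp hm

theorem abs_one_sided_rate_add_le (P : SmoothProfile H V K m) (hd : d ≠ 0)
    (hx : x ∈ Icc (0 : ℝ) 1) (h1 : x + d ∈ Icc (0 : ℝ) 1) (h2 : x + 2 * d ∈ Icc (0 : ℝ) 1)
    (hV : V 0 x = 0) :
    |(V 0 (x + 2 * d) - 4 * V 0 (x + d)) / (2 * d) + V 1 x| ≤ 6 * K * d ^ 2 := by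
  have hD := abs_one_sided_diff_sub_le (convex_Icc 0 1) P.nonneg
    (fun k hk => P.hasDerivWithinAt_V k (by omega)) (P.abs_V_le 3 (by norm_num)) hx h1 h2
  rw [hV] at hD
  have hd' : 0 < |d| := abs_pos.mpr hd
  rw [show (V 0 (x + 2 * d) - 4 * V 0 (x + d)) / (2 * d) + V 1 x
      = (V 0 (x + 2 * d) - 4 * V 0 (x + d) + 3 * 0 + 2 * d * V 1 x) / (2 * d) by
      field_simp; ring, abs_div, abs_mul, abs_two, div_le_iff₀ (by positivity)]
  calc _ ≤ 12 * K * |d| ^ 3 := hD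
    _ = 6 * K * d ^ 2 * (2 * |d|) := by rw [← sq_abs d]; ring

theorem abs_centered_rate_add_le (P : SmoothProfile H V K m) (hd : 0 < d)
    (hx : x ∈ Icc (0 : ℝ) 1) (hp : x + d ∈ Icc (0 : ℝ) 1) (hm : x - d ∈ Icc (0 : ℝ) 1) :
    |(V 0 (x - d) - V 0 (x + d)) / (2 * d)
        + V 0 x * ((Real.log (H 0 (x - d)) - Real.log (H 0 (x + d))) / (2 * d))
        + (V 1 x + V 0 x * (H 1 x / H 0 x))| ≤ (K + K * logDerivBound K m) * d ^ 2 := by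
  have hV := P.abs_centered_diff_V_sub_le hx hp hm
  have hL := P.abs_log_centered_diff_sub_le hx hp hm
  rw [abs_of_pos hd] at hV hL
  set cV := V 0 (x + d) - V 0 (x - d) - 2 * d * V 1 x
  set cL := Real.log (H 0 (x + d)) - Real.log (H 0 (x - d)) - 2 * d * (H 1 x / H 0 x)
  have hcL : |V 0 x * cL| ≤ K * (2 * logDerivBound K m * d ^ 3) := by
    rw [abs_mul]
    exact mul_le_mul (P.abs_V_le 0 (by norm_num) x hx) hL (abs_nonneg _) P.nonneg
  calc _ = |-((cV + V 0 x * cL) / (2 * d))| := by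
        congr 1
        simp only [cV, cL]
        field_simp
        ring
    _ = |cV + V 0 x * cL| / (2 * d) := by
        rw [abs_neg, abs_div, abs_of_pos (by positivity : 0 < 2 * d)]
    _ ≤ (2 * K * d ^ 3 + K * (2 * logDerivBound K m * d ^ 3)) / (2 * d) := by
        gcongr
        exact (abs_add_le _ _).trans (add_le_add hV hcL)
    _ = _ := by field_simp

theorem abs_log_diff_le (P : SmoothProfile H V K m) (hd : 0 < d) (hd1 : d ≤ 1)
    (hx : x ∈ Icc (0 : ℝ) 1) (hp : x + d ∈ Icc (0 : ℝ) 1) (hm : x - d ∈ Icc (0 : ℝ) 1) :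
    |Real.log (H 0 (x + d)) - Real.log (H 0 (x - d))| ≤ 2 * (logDerivBound K m + K / m) * d := by
  have hL := P.abs_log_centered_diff_sub_le hx hp hm
  rw [abs_of_pos hd] at hL
  have hd3 : d ^ 3 ≤ d := pow_le_of_le_one hd.le hd1 (by norm_num)
  have h2 : |2 * d * (H 1 x / H 0 x)| ≤ 2 * d * (K / m) := by
    rw [abs_mul, abs_of_pos (by positivity : 0 < 2 * d)]
    exact mul_le_mul_of_nonneg_left (P.abs_div_le hx) (by positivity)
  have := mul_le_mul_of_nonneg_left hd3 P.logDerivBound_nonneg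
  have := abs_sub_abs_le_abs_sub (Real.log (H 0 (x + d)) - Real.log (H 0 (x - d)))
    (2 * d * (H 1 x / H 0 x))
  linarith

theorem abs_diff_mul_log_diff_sub_le (P : SmoothProfile H V K m) (hd : 0 < d) (hd1 : d ≤ 1)
    (hx : x ∈ Icc (0 : ℝ) 1) (hp : x + d ∈ Icc (0 : ℝ) 1) (hm : x - d ∈ Icc (0 : ℝ) 1) :
    |(V 0 (x + d) - V 0 (x - d)) * (Real.log (H 0 (x + d)) - Real.log (H 0 (x - d)))
        - 4 * d ^ 2 * V 1 x * (H 1 x / H 0 x)|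
      ≤ 4 * K * (2 * logDerivBound K m + K / m) * d ^ 4 := by
  have hV := P.abs_centered_diff_V_sub_le hx hp hm
  have hL := P.abs_log_centered_diff_sub_le hx hp hm
  have hΔ := P.abs_log_diff_le hd hd1 hx hp hm
  rw [abs_of_pos hd] at hV hL
  have hV1 := P.abs_V_le 1 (by norm_num) x hx
  have := P.nonneg
  have := P.logDerivBound_nonneg
  have := div_nonneg P.nonneg P.pos.le
  calc _ = |(V 0 (x + d) - V 0 (x - d) - 2 * d * V 1 x)
          * (Real.log (H 0 (x + d)) - Real.log (H 0 (x - d)))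
        + 2 * d * V 1 x
          * (Real.log (H 0 (x + d)) - Real.log (H 0 (x - d)) - 2 * d * (H 1 x / H 0 x))| := by
        congr 1; ring
    _ ≤ 2 * K * d ^ 3 * (2 * (logDerivBound K m + K / m) * d)
        + 2 * d * K * (2 * logDerivBound K m * d ^ 3) := by
        refine (abs_add_le _ _).trans (add_le_add ?_ ?_) <;> rw [abs_mul]
        · exact mul_le_mul hV hΔ (abs_nonneg _) (by positivity)
        · rw [abs_mul, abs_of_pos (by positivity : 0 < 2 * d)]
          gcongr
    _ = _ := by ring

/-- The target `μ v_xx + μ v_x h_x / h - v v_x - h_x + f` is `v_t`, by the momentum equation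
after `h_t` is eliminated through the continuity equation. -/
theorem abs_velocity_update_sub_le (P : SmoothProfile H V K m) (hd : 0 < d) (hd1 : d ≤ 1)
    (hx : x ∈ Icc (0 : ℝ) 1) (hp : x + d ∈ Icc (0 : ℝ) 1) (hm : x - d ∈ Icc (0 : ℝ) 1)
    (δt μ fd : ℝ) :
    |(1 - 2 * δt * μ / d ^ 2) * V 0 x + δt * μ / d ^ 2 * (V 0 (x + d) + V 0 (x - d))
        + δt * μ / (4 * d ^ 2) * (V 0 (x + d) - V 0 (x - d))
          * Real.log (H 0 (x + d) / H 0 (x - d))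
        - δt / (2 * d) * (V 0 x * (V 0 (x + d) - V 0 (x - d)) + H 0 (x + d) - H 0 (x - d))
        + fd * δt - V 0 x
        - δt * (μ * V 2 x + μ * V 1 x * (H 1 x / H 0 x) - V 0 x * V 1 x - H 1 x + fd)|
      ≤ (2 * |μ| * K + |μ| * K * (2 * logDerivBound K m + K / m) + K ^ 2 + K) * |δt| * d ^ 2 := by
  have hS := abs_second_diff_sub_le (convex_Icc 0 1) P.nonneg P.hasDerivWithinAt_V
    (P.abs_V_le 4 le_rfl) hx hp hm
  have hP := P.abs_diff_mul_log_diff_sub_le hd hd1 hx hp hm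
  have hV := P.abs_centered_diff_V_sub_le hx hp hm
  have hH := P.abs_centered_diff_H_sub_le hx hp hm
  rw [abs_of_pos hd] at hV hH
  have hQ : |V 0 x * (V 0 (x + d) - V 0 (x - d) - 2 * d * V 1 x)
      + (H 0 (x + d) - H 0 (x - d) - 2 * d * H 1 x)| ≤ K * (2 * K * d ^ 3) + 2 * K * d ^ 3 := by
    refine (abs_add_le _ _).trans (add_le_add ?_ hH)
    rw [abs_mul]
    exact mul_le_mul (P.abs_V_le 0 (by norm_num) x hx) hV (abs_nonneg _) P.nonneg
  rw [Real.log_div (P.pos.trans_le (P.le_H _ hp)).ne' (P.pos.trans_le (P.le_H _ hm)).ne']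
  calc _ = |δt| * |μ / d ^ 2 * (V 0 (x + d) - 2 * V 0 x + V 0 (x - d) - d ^ 2 * V 2 x)
        + μ / (4 * d ^ 2) * ((V 0 (x + d) - V 0 (x - d))
            * (Real.log (H 0 (x + d)) - Real.log (H 0 (x - d)))
          - 4 * d ^ 2 * V 1 x * (H 1 x / H 0 x))
        - (V 0 x * (V 0 (x + d) - V 0 (x - d) - 2 * d * V 1 x)
          + (H 0 (x + d) - H 0 (x - d) - 2 * d * H 1 x)) / (2 * d)| := by
        rw [← abs_mul]; congr 1; field_simp; ring
    _ ≤ |δt| * (|μ| * (2 * K * d ^ 4) / d ^ 2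
        + |μ| * (4 * K * (2 * logDerivBound K m + K / m) * d ^ 4) / (4 * d ^ 2)
        + (K * (2 * K * d ^ 3) + 2 * K * d ^ 3) / (2 * d)) := by
        gcongr
        refine (abs_sub _ _).trans (add_le_add ((abs_add_le _ _).trans (add_le_add ?_ ?_)) ?_)
        all_goals
          simp only [abs_mul, abs_div, abs_of_pos (by positivity : 0 < d ^ 2),
            abs_of_pos (by positivity : 0 < 4 * d ^ 2), abs_of_pos (by positivity : 0 < 2 * d)]
        · rw [mul_div_right_comm]; gcongr
        · rw [mul_div_right_comm]; gcongr
        · gcongr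
    _ = _ := by field_simp; ring

theorem exists_hPlus_zero_eq (P : SmoothProfile H V K m) (hV0 : V 0 0 = 0) {n : ℕ} (hn : 2 ≤ n)
    {δx : ℝ} (hnδx : n * δx = 1) (δt : ℝ) :
    ∃ a, hPlus δt δx n (fun j => H 0 (j * δx)) (fun j => V 0 (j * δx)) 0
        = H 0 0 * Real.exp (δt * a) ∧ |a + V 1 0| ≤ 6 * K * δx ^ 2 := by
  refine ⟨(V 0 (2 * δx) - 4 * V 0 δx) / (2 * δx), ?_, ?_⟩
  · simp only [hPlus, if_pos]
    push_cast
    ring_nf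
  · have := P.abs_one_sided_rate_add_le (pos_of_natCast_mul_eq_one hnδx).ne' (x := 0)
      (by norm_num) (by simpa using natCast_mul_mem_Icc hnδx (j := 1) (by omega))
      (by simpa using natCast_mul_mem_Icc hnδx hn) hV0
    simpa only [zero_add] using this

theorem exists_hPlus_self_eq (P : SmoothProfile H V K m) (hV1 : V 0 1 = 0) {n : ℕ} (hn : 2 ≤ n)
    {δx : ℝ} (hnδx : n * δx = 1) (δt : ℝ) :
    ∃ a, hPlus δt δx n (fun j => H 0 (j * δx)) (fun j => V 0 (j * δx)) n
        = H 0 1 * Real.exp (δt * a) ∧ |a + V 1 1| ≤ 6 * K * δx ^ 2 := by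
  have hm1 : ((n - 1 : ℕ) : ℝ) * δx = 1 - δx := by rw [natCast_sub_one_mul (by omega), hnδx]
  have hm2 : ((n - 2 : ℕ) : ℝ) * δx = 1 - 2 * δx := by
    rw [Nat.cast_sub hn, sub_mul, hnδx, Nat.cast_ofNat]
  refine ⟨(4 * V 0 (1 - δx) - V 0 (1 - 2 * δx)) / (2 * δx), ?_, ?_⟩
  · rw [hPlus, if_neg (by omega), if_pos rfl, hm1, hm2, hnδx]
    ring_nf
  · have := P.abs_one_sided_rate_add_le (neg_ne_zero.mpr (pos_of_natCast_mul_eq_one hnδx).ne')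
      (x := 1) (by norm_num)
      (by simpa [← sub_eq_add_neg, ← hm1] using natCast_mul_mem_Icc hnδx (Nat.sub_le n 1))
      (by simpa [← sub_eq_add_neg, ← hm2] using natCast_mul_mem_Icc hnδx (Nat.sub_le n 2)) hV1
    rw [← sub_eq_add_neg, mul_neg, ← sub_eq_add_neg, neg_sq] at this
    refine le_of_eq_of_le ?_ this
    congr 1
    field_simp
    ring

theorem exists_hPlus_eq_of_pos_of_lt (P : SmoothProfile H V K m) {n : ℕ} {δx : ℝ}
    (hnδx : n * δx = 1) {i : ℕ} (hi0 : 0 < i) (hin : i < n) (δt : ℝ) :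
    ∃ a, hPlus δt δx n (fun j => H 0 (j * δx)) (fun j => V 0 (j * δx)) i
        = H 0 (i * δx) * Real.exp (δt * a) ∧
      |a + (V 1 (i * δx) + V 0 (i * δx) * (H 1 (i * δx) / H 0 (i * δx)))|
        ≤ (K + K * logDerivBound K m) * δx ^ 2 := by
  set x := (i : ℝ) * δx
  have hm : x - δx ∈ Icc (0 : ℝ) 1 :=
    natCast_sub_one_mul hi0 ▸ natCast_mul_mem_Icc hnδx (j := i - 1) (by omega)
  have hp : x + δx ∈ Icc (0 : ℝ) 1 := natCast_add_one_mul ▸ natCast_mul_mem_Icc hnδx hin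
  refine ⟨(V 0 (x - δx) - V 0 (x + δx)) / (2 * δx)
    + V 0 x * ((Real.log (H 0 (x - δx)) - Real.log (H 0 (x + δx))) / (2 * δx)), ?_,
    P.abs_centered_rate_add_le (pos_of_natCast_mul_eq_one hnδx)
      (natCast_mul_mem_Icc hnδx hin.le) hp hm⟩
  rw [hPlus, if_neg hi0.ne', if_neg hin.ne]
  simp only [natCast_sub_one_mul hi0, natCast_add_one_mul]
  rw [Real.log_div (P.pos.trans_le (P.le_H _ hm)).ne' (P.pos.trans_le (P.le_H _ hp)).ne']
  congr 2
  ring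

/-- The exponent approximates `h_t / h`, which is `-(v_x + v h_x / h)` by the continuity
equation. -/
theorem exists_hPlus_eq_mul_exp (P : SmoothProfile H V K m) (hV0 : V 0 0 = 0) (hV1 : V 0 1 = 0)
    {n : ℕ} (hn : 2 ≤ n) {δx : ℝ} (hnδx : n * δx = 1) {i : ℕ} (hi : i ≤ n) (δt : ℝ) :
    ∃ a, hPlus δt δx n (fun j => H 0 (j * δx)) (fun j => V 0 (j * δx)) i
        = H 0 (i * δx) * Real.exp (δt * a) ∧
      |a + (V 1 (i * δx) + V 0 (i * δx) * (H 1 (i * δx) / H 0 (i * δx)))|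
        ≤ (6 * K + K * logDerivBound K m) * δx ^ 2 := by
  have hK := P.nonneg
  have hKL := mul_nonneg hK P.logDerivBound_nonneg
  have hC : ∀ c ≤ 6 * K + K * logDerivBound K m,
      c * δx ^ 2 ≤ (6 * K + K * logDerivBound K m) * δx ^ 2 :=
    fun c hc => mul_le_mul_of_nonneg_right hc (sq_nonneg _)
  rcases Nat.eq_zero_or_pos i with rfl | hi0
  · obtain ⟨a, ha, hab⟩ := P.exists_hPlus_zero_eq hV0 hn hnδx δt
    exact ⟨a, by simpa using ha, by simpa [hV0] using hab.trans (hC _ (by linarith))⟩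
  rcases hi.eq_or_lt with rfl | hin
  · obtain ⟨a, ha, hab⟩ := P.exists_hPlus_self_eq hV1 hn hnδx δt
    refine ⟨a, by rwa [hnδx], ?_⟩
    rw [hnδx, hV1, zero_mul, add_zero]
    exact hab.trans (hC _ (by linarith))
  · obtain ⟨a, ha, hab⟩ := P.exists_hPlus_eq_of_pos_of_lt hnδx hi0 hin δt
    exact ⟨a, ha, hab.trans (hC _ (by linarith))⟩

theorem abs_vPlus_sub_le (P : SmoothProfile H V K m) {n : ℕ} {δx : ℝ} (hnδx : n * δx = 1)
    {i : ℕ} (hi0 : 0 < i) (hin : i < n) (δt μ fd : ℝ) :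
    |vPlus δt δx μ fd n (fun j => H 0 (j * δx)) (fun j => V 0 (j * δx)) i - V 0 (i * δx)
        - δt * (μ * V 2 (i * δx) + μ * V 1 (i * δx) * (H 1 (i * δx) / H 0 (i * δx))
          - V 0 (i * δx) * V 1 (i * δx) - H 1 (i * δx) + fd)|
      ≤ (2 * |μ| * K + |μ| * K * (2 * logDerivBound K m + K / m) + K ^ 2 + K) * |δt| * δx ^ 2 := by
  have hgrid : ∀ j ≤ n, (j : ℝ) * δx ∈ Icc (0 : ℝ) 1 := fun j hj => natCast_mul_mem_Icc hnδx hj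
  have hm : (i : ℝ) * δx - δx ∈ Icc (0 : ℝ) 1 := natCast_sub_one_mul hi0 ▸ hgrid (i - 1) (by omega)
  have hp : (i : ℝ) * δx + δx ∈ Icc (0 : ℝ) 1 := natCast_add_one_mul ▸ hgrid (i + 1) hin
  rw [vPlus, if_neg (by omega)]
  simp only [natCast_sub_one_mul hi0, natCast_add_one_mul]
  exact P.abs_velocity_update_sub_le (pos_of_natCast_mul_eq_one hnδx)
    (by simpa using (hgrid 1 (by omega)).2) (hgrid i hin.le) hp hm δt μ fd

end SmoothProfile

section Observer

variable {T γ β μ : ℝ} {ξ w ζ z f a b a' b' : ℝ → ℝ}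

theorem exists_hasDerivWithinAt_feedback {σ lam q k : ℝ}
    (hξ : ∀ t ∈ Icc 0 T, HasDerivWithinAt ξ (w t) (Icc 0 T) t)
    (hw : ∀ t ∈ Icc 0 T, HasDerivWithinAt w (-(f t)) (Icc 0 T) t)
    (hζ : ∀ t ∈ Icc 0 T, HasDerivWithinAt ζ (-γ * ζ t - γ ^ 2 * ξ t - f t) (Icc 0 T) t)
    (hz : ∀ t ∈ Icc 0 T, HasDerivWithinAt z
      (f t - 1 / 2 * (b t ^ 2 - a t ^ 2) - β * (z t - μ * (b t - a t))) (Icc 0 T) t)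
    (ha : ∀ t ∈ Icc 0 T, HasDerivWithinAt a (a' t) (Icc 0 T) t) (ha' : ContinuousOn a' (Icc 0 T))
    (hb : ∀ t ∈ Icc 0 T, HasDerivWithinAt b (b' t) (Icc 0 T) t) (hb' : ContinuousOn b' (Icc 0 T))
    (hf : ∀ t ∈ Icc 0 T, f t = -σ * (2 * lam * z t + (1 - 2 * lam) * μ * (b t - a t)
        - q * (ζ t + (γ + k) * ξ t))) :
    ∃ f' : ℝ → ℝ, (∀ t ∈ Icc 0 T, HasDerivWithinAt f (f' t) (Icc 0 T) t)
      ∧ ContinuousOn f' (Icc 0 T) := by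
  have cont {g g' : ℝ → ℝ} (hg : ∀ t ∈ Icc 0 T, HasDerivWithinAt g (g' t) (Icc 0 T) t) :
      ContinuousOn g (Icc 0 T) := fun t ht => (hg t ht).continuousWithinAt
  have hfc : ContinuousOn f (Icc 0 T) := ContinuousOn.congr (by
    have := cont hz; have := cont hζ; have := cont hξ; have := cont ha; have := cont hb
    fun_prop) hf
  refine ⟨fun t => -σ * (2 * lam * (f t - 1 / 2 * (b t ^ 2 - a t ^ 2) - β * (z t - μ * (b t - a t)))
      + (1 - 2 * lam) * μ * (b' t - a' t)
      - q * ((-γ * ζ t - γ ^ 2 * ξ t - f t) + (γ + k) * w t)), fun t ht => ?_, ?_⟩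
  · refine HasDerivWithinAt.congr ?_ hf (hf t ht)
    exact (((hz t ht).const_mul _).add (((hb t ht).sub (ha t ht)).const_mul _) |>.sub
      (((hζ t ht).add ((hξ t ht).const_mul _)).const_mul q)).const_mul _
  · have := cont hz; have := cont hζ; have := cont hξ; have := cont ha; have := cont hb
    have := cont hw
    fun_prop

theorem exists_tank_step_error {f' : ℝ → ℝ}
    (hξ : ∀ t ∈ Icc 0 T, HasDerivWithinAt ξ (w t) (Icc 0 T) t)
    (hw : ∀ t ∈ Icc 0 T, HasDerivWithinAt w (-(f t)) (Icc 0 T) t)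
    (hf : ∀ t ∈ Icc 0 T, HasDerivWithinAt f (f' t) (Icc 0 T) t) (hf' : ContinuousOn f' (Icc 0 T)) :
    ∃ C, 0 ≤ C ∧ ∀ δt ∈ Icc 0 T,
      |ξ 0 + δt * w 0 - δt ^ 2 / 2 * f 0 - ξ δt| ≤ C * δt ^ 2
        ∧ |w 0 - δt * f 0 - w δt| ≤ C * δt ^ 2 := by
  obtain ⟨Cξ, hCξ, hξ2⟩ := exists_abs_sub_sub_mul_le_sq hξ hw
    (fun t ht => (hf t ht).continuousWithinAt.neg)
  obtain ⟨Cw, hCw, hw2⟩ := exists_abs_sub_sub_mul_le_sq hw (fun t ht => (hf t ht).neg) hf'.neg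
  refine ⟨Cξ + |f 0| / 2 + Cw, by positivity, fun δt hδt => ⟨?_, ?_⟩⟩
  · calc _ = |-(ξ δt - ξ 0 - δt * w 0) - δt ^ 2 / 2 * f 0| := by ring_nf
      _ ≤ _ := (abs_sub _ _).trans (by
        rw [abs_neg, abs_mul, abs_of_nonneg (by positivity : 0 ≤ δt ^ 2 / 2)]
        nlinarith [hξ2 δt hδt, sq_nonneg δt])
  · rw [show w 0 - δt * f 0 - w δt = -(w δt - w 0 - δt * -f 0) by ring, abs_neg]
    nlinarith [hw2 δt hδt, sq_nonneg δt, abs_nonneg (f 0)]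

theorem exists_filter_step_error {f' : ℝ → ℝ}
    (hz : ∀ t ∈ Icc 0 T, HasDerivWithinAt z
      (f t - 1 / 2 * (b t ^ 2 - a t ^ 2) - β * (z t - μ * (b t - a t))) (Icc 0 T) t)
    (hf : ∀ t ∈ Icc 0 T, HasDerivWithinAt f (f' t) (Icc 0 T) t) (hf' : ContinuousOn f' (Icc 0 T))
    (ha : ∀ t ∈ Icc 0 T, HasDerivWithinAt a (a' t) (Icc 0 T) t) (ha' : ContinuousOn a' (Icc 0 T))
    (hb : ∀ t ∈ Icc 0 T, HasDerivWithinAt b (b' t) (Icc 0 T) t) (hb' : ContinuousOn b' (Icc 0 T)) :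
    ∃ C, 0 ≤ C ∧ ∀ δt ∈ Icc 0 T,
      |z 0 + δt * (f 0 - 1 / 2 * (b 0 ^ 2 - a 0 ^ 2) - β * (z 0 - μ * (b 0 - a 0))) - z δt|
        ≤ C * δt ^ 2 := by
  have cont {g g' : ℝ → ℝ} (hg : ∀ t ∈ Icc 0 T, HasDerivWithinAt g (g' t) (Icc 0 T) t) :
      ContinuousOn g (Icc 0 T) := fun t ht => (hg t ht).continuousWithinAt
  have hz' : ∀ t ∈ Icc 0 T, HasDerivWithinAt
      (fun t => f t - 1 / 2 * (b t ^ 2 - a t ^ 2) - β * (z t - μ * (b t - a t)))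
      (f' t - 1 / 2 * (2 * b t * b' t - 2 * a t * a' t)
        - β * ((f t - 1 / 2 * (b t ^ 2 - a t ^ 2) - β * (z t - μ * (b t - a t)))
          - μ * (b' t - a' t))) (Icc 0 T) t := fun t ht =>
    ((hf t ht).sub ((((hb t ht).pow 2).sub ((ha t ht).pow 2)).const_mul _) |>.sub
      (((hz t ht).sub (((hb t ht).sub (ha t ht)).const_mul μ)).const_mul β)).congr_deriv
      (by simp)
  obtain ⟨C, hC, hz2⟩ := exists_abs_sub_sub_mul_le_sq hz hz' (by
    have := cont hz; have := cont ha; have := cont hb; have := cont hf; fun_prop)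
  refine ⟨C, hC, fun δt hδt => ?_⟩
  rw [abs_sub_comm]
  simpa [sub_sub] using hz2 δt hδt

/-- The observer step is exact for `ζ - w + γ ξ`, which solves `e' = -γ e`, so its error is that
of the `w`- and `ξ`-steps. -/
theorem exists_observer_step_error {f' : ℝ → ℝ}
    (hξ : ∀ t ∈ Icc 0 T, HasDerivWithinAt ξ (w t) (Icc 0 T) t)
    (hw : ∀ t ∈ Icc 0 T, HasDerivWithinAt w (-(f t)) (Icc 0 T) t)
    (hζ : ∀ t ∈ Icc 0 T, HasDerivWithinAt ζ (-γ * ζ t - γ ^ 2 * ξ t - f t) (Icc 0 T) t)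
    (hz : ∀ t ∈ Icc 0 T, HasDerivWithinAt z
      (f t - 1 / 2 * (b t ^ 2 - a t ^ 2) - β * (z t - μ * (b t - a t))) (Icc 0 T) t)
    (hf : ∀ t ∈ Icc 0 T, HasDerivWithinAt f (f' t) (Icc 0 T) t) (hf' : ContinuousOn f' (Icc 0 T))
    (ha : ∀ t ∈ Icc 0 T, HasDerivWithinAt a (a' t) (Icc 0 T) t) (ha' : ContinuousOn a' (Icc 0 T))
    (hb : ∀ t ∈ Icc 0 T, HasDerivWithinAt b (b' t) (Icc 0 T) t) (hb' : ContinuousOn b' (Icc 0 T)) :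
    ∃ C, 0 ≤ C ∧ ∀ δt ∈ Icc 0 T,
      |ξ 0 + δt * w 0 - δt ^ 2 / 2 * f 0 - ξ δt| + |w 0 - δt * f 0 - w δt|
        + |z 0 + δt * (f 0 - 1 / 2 * (b 0 ^ 2 - a 0 ^ 2) - β * (z 0 - μ * (b 0 - a 0))) - z δt|
        + |w 0 - δt * f 0 - γ * (ξ 0 + δt * w 0 - δt ^ 2 / 2 * f 0)
            + Real.exp (-γ * δt) * (ζ 0 - w 0 + γ * ξ 0) - ζ δt|
      ≤ C * δt ^ 2 := by
  obtain ⟨C₁, hC₁, htank⟩ := exists_tank_step_error hξ hw hf hf'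
  obtain ⟨C₂, hC₂, hfilter⟩ := exists_filter_step_error hz hf hf' ha ha' hb hb'
  have hexp := eq_exp_mul_of_hasDerivWithinAt (e := fun t => ζ t - w t + γ * ξ t) (c := -γ)
    fun t ht => ((hζ t ht).sub (hw t ht)).add ((hξ t ht).const_mul γ) |>.congr_deriv (by ring)
  refine ⟨(3 + |γ|) * C₁ + C₂, by positivity, fun δt hδt => ?_⟩
  obtain ⟨eξ, ew⟩ := htank δt hδt
  have eζ : w 0 - δt * f 0 - γ * (ξ 0 + δt * w 0 - δt ^ 2 / 2 * f 0)
      + Real.exp (-γ * δt) * (ζ 0 - w 0 + γ * ξ 0) - ζ δt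
      = (w 0 - δt * f 0 - w δt) - γ * (ξ 0 + δt * w 0 - δt ^ 2 / 2 * f 0 - ξ δt) := by
    rw [← hexp δt hδt]; ring
  have eζ' : |(w 0 - δt * f 0 - w δt) - γ * (ξ 0 + δt * w 0 - δt ^ 2 / 2 * f 0 - ξ δt)|
      ≤ C₁ * δt ^ 2 + |γ| * (C₁ * δt ^ 2) := by
    refine (abs_sub _ _).trans (add_le_add ew ?_)
    rw [abs_mul]
    exact mul_le_mul_of_nonneg_left eξ (abs_nonneg γ)
  rw [eζ]
  linarith [hfilter δt hδt]

theorem exists_closed_loop_step_error {σ lam q k : ℝ}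
    (hξ : ∀ t ∈ Icc 0 T, HasDerivWithinAt ξ (w t) (Icc 0 T) t)
    (hw : ∀ t ∈ Icc 0 T, HasDerivWithinAt w (-(f t)) (Icc 0 T) t)
    (hζ : ∀ t ∈ Icc 0 T, HasDerivWithinAt ζ (-γ * ζ t - γ ^ 2 * ξ t - f t) (Icc 0 T) t)
    (hz : ∀ t ∈ Icc 0 T, HasDerivWithinAt z
      (f t - 1 / 2 * (b t ^ 2 - a t ^ 2) - β * (z t - μ * (b t - a t))) (Icc 0 T) t)
    (ha : ∀ t ∈ Icc 0 T, HasDerivWithinAt a (a' t) (Icc 0 T) t) (ha' : ContinuousOn a' (Icc 0 T))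
    (hb : ∀ t ∈ Icc 0 T, HasDerivWithinAt b (b' t) (Icc 0 T) t) (hb' : ContinuousOn b' (Icc 0 T))
    (hf : ∀ t ∈ Icc 0 T, f t = -σ * (2 * lam * z t + (1 - 2 * lam) * μ * (b t - a t)
        - q * (ζ t + (γ + k) * ξ t))) :
    ∃ C, 0 ≤ C ∧ ∀ δt ∈ Icc 0 T,
      |ξ 0 + δt * w 0 - δt ^ 2 / 2 * f 0 - ξ δt| + |w 0 - δt * f 0 - w δt|
        + |z 0 + δt * (f 0 - 1 / 2 * (b 0 ^ 2 - a 0 ^ 2) - β * (z 0 - μ * (b 0 - a 0))) - z δt|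
        + |w 0 - δt * f 0 - γ * (ξ 0 + δt * w 0 - δt ^ 2 / 2 * f 0)
            + Real.exp (-γ * δt) * (ζ 0 - w 0 + γ * ξ 0) - ζ δt|
      ≤ C * δt ^ 2 := by
  obtain ⟨f', hf', hf'c⟩ := exists_hasDerivWithinAt_feedback hξ hw hζ hz ha ha' hb hb' hf
  exact exists_observer_step_error hξ hw hζ hz hf' hf'c ha ha' hb hb'

end Observer

/-- `Dh j i` and `Dv j i` stand for `∂ₜ^j ∂ₓ^i h` and `∂ₜ^j ∂ₓ^i v`. -/
structure IsClassicalSolution (μ T : ℝ) (f : ℝ → ℝ) (h v : ℝ → ℝ → ℝ)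
    (Dh Dv : ℕ → ℕ → ℝ → ℝ → ℝ) : Prop where
  Dh_zero : Dh 0 0 = h
  Dv_zero : Dv 0 0 = v
  pos : ∀ t ∈ Icc 0 T, ∀ x ∈ Icc (0:ℝ) 1, 0 < h t x
  hasDerivWithinAt_Dh_t : ∀ j < 2, ∀ i ≤ 4, ∀ t ∈ Icc 0 T, ∀ x ∈ Icc (0:ℝ) 1,
    HasDerivWithinAt (fun s => Dh j i s x) (Dh (j + 1) i t x) (Icc 0 T) t
  hasDerivWithinAt_Dv_t : ∀ j < 2, ∀ i ≤ 4, ∀ t ∈ Icc 0 T, ∀ x ∈ Icc (0:ℝ) 1,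
    HasDerivWithinAt (fun s => Dv j i s x) (Dv (j + 1) i t x) (Icc 0 T) t
  hasDerivWithinAt_Dh_x : ∀ j ≤ 2, ∀ i < 4, ∀ t ∈ Icc 0 T, ∀ x ∈ Icc (0:ℝ) 1,
    HasDerivWithinAt (fun y => Dh j i t y) (Dh j (i + 1) t x) (Icc 0 1) x
  hasDerivWithinAt_Dv_x : ∀ j ≤ 2, ∀ i < 4, ∀ t ∈ Icc 0 T, ∀ x ∈ Icc (0:ℝ) 1,
    HasDerivWithinAt (fun y => Dv j i t y) (Dv j (i + 1) t x) (Icc 0 1) x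
  continuousOn_Dh : ∀ j ≤ 2, ∀ i ≤ 4,
    ContinuousOn (fun p : ℝ × ℝ => Dh j i p.1 p.2) (Icc 0 T ×ˢ Icc (0:ℝ) 1)
  continuousOn_Dv : ∀ j ≤ 2, ∀ i ≤ 4,
    ContinuousOn (fun p : ℝ × ℝ => Dv j i p.1 p.2) (Icc 0 T ×ˢ Icc (0:ℝ) 1)
  mass_eq : ∀ t ∈ Icc 0 T, ∀ x ∈ Icc (0:ℝ) 1,
    Dh 1 0 t x + (Dh 0 1 t x * v t x + h t x * Dv 0 1 t x) = 0
  momentum_eq : ∀ t ∈ Icc 0 T, ∀ x ∈ Ioo (0:ℝ) 1,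
    Dh 1 0 t x * v t x + h t x * Dv 1 0 t x
      + (Dh 0 1 t x * (v t x) ^ 2 + 2 * h t x * v t x * Dv 0 1 t x + h t x * Dh 0 1 t x)
    = μ * (Dh 0 1 t x * Dv 0 1 t x + h t x * Dv 0 2 t x) + h t x * f t
  boundary : ∀ t ∈ Icc 0 T, v t 0 = 0 ∧ v t 1 = 0

namespace IsClassicalSolution

variable {μ T : ℝ} {f : ℝ → ℝ} {h v : ℝ → ℝ → ℝ} {Dh Dv : ℕ → ℕ → ℝ → ℝ → ℝ}

theorem exists_bound (S : IsClassicalSolution μ T f h v Dh Dv) :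
    ∃ K, 0 ≤ K ∧ ∀ j ≤ 2, ∀ i ≤ 4, ∀ t ∈ Icc 0 T, ∀ x ∈ Icc (0:ℝ) 1,
      |Dh j i t x| ≤ K ∧ |Dv j i t x| ≤ K := by
  have hS := isCompact_Icc.prod (isCompact_Icc (a := (0:ℝ)) (b := 1)) (s := Icc 0 T)
  have mem {j i : ℕ} (hj : j ≤ 2) (hi : i ≤ 4) : (j, i) ∈ Finset.range 3 ×ˢ Finset.range 5 := by
    simp only [Finset.mem_product, Finset.mem_range]; omega
  obtain ⟨Kh, hKh, hh⟩ := hS.exists_forall_abs_le_of_continuousOn (Finset.range 3 ×ˢ Finset.range 5)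
    (F := fun a p => Dh a.1 a.2 p.1 p.2) fun a ha => by
      simp only [Finset.mem_product, Finset.mem_range] at ha
      exact S.continuousOn_Dh _ (by omega) _ (by omega)
  obtain ⟨Kv, hKv, hv⟩ := hS.exists_forall_abs_le_of_continuousOn (Finset.range 3 ×ˢ Finset.range 5)
    (F := fun a p => Dv a.1 a.2 p.1 p.2) fun a ha => by
      simp only [Finset.mem_product, Finset.mem_range] at ha
      exact S.continuousOn_Dv _ (by omega) _ (by omega)
  exact ⟨max Kh Kv, hKh.trans (le_max_left _ _), fun j hj i hi t ht x hx =>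
    ⟨(hh _ (mem hj hi) (t, x) ⟨ht, hx⟩).trans (le_max_left _ _),
      (hv _ (mem hj hi) (t, x) ⟨ht, hx⟩).trans (le_max_right _ _)⟩⟩

theorem exists_smoothProfile (S : IsClassicalSolution μ T f h v Dh Dv) (hT : 0 ≤ T) :
    ∃ K m, SmoothProfile (fun k => Dh 0 k 0) (fun k => Dv 0 k 0) K m := by
  have h0 : (0 : ℝ) ∈ Icc 0 T := ⟨le_rfl, hT⟩
  obtain ⟨K, -, hK⟩ := S.exists_bound
  have hcont : ContinuousOn (h 0) (Icc 0 1) := fun x hx => by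
    simpa [S.Dh_zero] using (S.hasDerivWithinAt_Dh_x 0 (by norm_num) 0 (by norm_num) 0 h0 x hx
      |>.continuousWithinAt)
  obtain ⟨x₀, hx₀, hmin⟩ := isCompact_Icc.exists_isMinOn (nonempty_Icc.mpr zero_le_one) hcont
  exact ⟨K, h 0 x₀,
    { hasDerivWithinAt_H := fun k hk x hx =>
        S.hasDerivWithinAt_Dh_x 0 (by norm_num) k (by omega) 0 h0 x hx
      hasDerivWithinAt_V := fun k hk x hx =>
        S.hasDerivWithinAt_Dv_x 0 (by norm_num) k hk 0 h0 x hx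
      abs_H_le := fun k hk x hx => (hK 0 (by norm_num) k (by omega) 0 h0 x hx).1
      abs_V_le := fun k hk x hx => (hK 0 (by norm_num) k hk 0 h0 x hx).2
      pos := S.pos 0 h0 x₀ hx₀
      le_H := fun x hx => by simpa [S.Dh_zero] using hmin hx }⟩

theorem exists_abs_time_taylor_le (S : IsClassicalSolution μ T f h v Dh Dv) :
    ∃ K, 0 ≤ K ∧ ∀ t ∈ Icc 0 T, ∀ x ∈ Icc (0:ℝ) 1,
      |h t x - h 0 x - t * Dh 1 0 0 x| ≤ K * t ^ 2
        ∧ |v t x - v 0 x - t * Dv 1 0 0 x| ≤ K * t ^ 2 := by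
  obtain ⟨K, hK, hbd⟩ := S.exists_bound
  refine ⟨K, hK, fun t ht x hx => ?_⟩
  have h0 : (0 : ℝ) ∈ Icc 0 T := ⟨le_rfl, ht.1.trans ht.2⟩
  have taylor {D : ℕ → ℕ → ℝ → ℝ → ℝ}
      (hD : ∀ j < 2, ∀ u ∈ Icc 0 T, HasDerivWithinAt (fun s => D j 0 s x) (D (j + 1) 0 u x)
        (Icc 0 T) u) (hD2 : ∀ u ∈ Icc 0 T, |D 2 0 u x| ≤ K) :
      |D 0 0 t x - D 0 0 0 x - t * D 1 0 0 x| ≤ K * t ^ 2 := by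
    simpa [abs_of_nonneg ht.1] using abs_sub_sub_mul_le_of_hasDerivWithinAt (convex_Icc 0 T)
      (hD 0 (by norm_num)) (hD 1 (by norm_num)) hK hD2 h0 ht
  rw [← S.Dh_zero, ← S.Dv_zero]
  exact ⟨taylor (fun j hj u hu => S.hasDerivWithinAt_Dh_t j hj 0 (by norm_num) u hu x hx)
      (fun u hu => (hbd 2 le_rfl 0 (by norm_num) u hu x hx).1),
    taylor (fun j hj u hu => S.hasDerivWithinAt_Dv_t j hj 0 (by norm_num) u hu x hx)
      (fun u hu => (hbd 2 le_rfl 0 (by norm_num) u hu x hx).2)⟩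

theorem hasDerivWithinAt_h_t (S : IsClassicalSolution μ T f h v Dh Dv) {x : ℝ}
    (hx : x ∈ Icc (0 : ℝ) 1) :
    ∀ t ∈ Icc 0 T, HasDerivWithinAt (fun s => h s x) (Dh 1 0 t x) (Icc 0 T) t := fun t ht => by
  simpa [S.Dh_zero] using S.hasDerivWithinAt_Dh_t 0 (by norm_num) 0 (by norm_num) t ht x hx

theorem continuousOn_Dh_t (S : IsClassicalSolution μ T f h v Dh Dv) {x : ℝ}
    (hx : x ∈ Icc (0 : ℝ) 1) : ContinuousOn (fun t => Dh 1 0 t x) (Icc 0 T) := fun t ht =>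
  (S.hasDerivWithinAt_Dh_t 1 (by norm_num) 0 (by norm_num) t ht x hx).continuousWithinAt

theorem Dh_one_zero_eq (S : IsClassicalSolution μ T f h v Dh Dv) (hT : 0 ≤ T) {x : ℝ}
    (hx : x ∈ Icc (0 : ℝ) 1) :
    Dh 1 0 0 x = -(h 0 x * (Dv 0 1 0 x + v 0 x * (Dh 0 1 0 x / h 0 x))) := by
  have h0 : (0 : ℝ) ∈ Icc 0 T := ⟨le_rfl, hT⟩
  have hmass := S.mass_eq 0 h0 x hx
  have := (S.pos 0 h0 x hx).ne'
  field_simp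
  linear_combination hmass

theorem exists_hPlus_error (S : IsClassicalSolution μ T f h v Dh Dv) (hT : 0 ≤ T) :
    ∃ C ε, 0 ≤ C ∧ 0 < ε ∧ ∀ n : ℕ, 2 ≤ n → ∀ δx : ℝ, n * δx = 1 → ∀ i ≤ n,
      ∀ δt ∈ Icc 0 T, δt ≤ ε →
        |hPlus δt δx n (fun j => h 0 (j * δx)) (fun j => v 0 (j * δx)) i - h δt (i * δx)|
          ≤ C * δt * (δt + δx ^ 2) := by
  have h0 : (0 : ℝ) ∈ Icc 0 T := ⟨le_rfl, hT⟩
  obtain ⟨K, m, P⟩ := S.exists_smoothProfile hT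
  obtain ⟨Kt, hKt, htay⟩ := S.exists_abs_time_taylor_le
  have hK := P.nonneg
  set C₁ := 6 * K + K * logDerivBound K m
  have hC₁ : 0 ≤ C₁ := by have := P.logDerivBound_nonneg; positivity
  set A := K + K * (K / m) + C₁
  have hA : 0 ≤ A := by have := div_nonneg hK P.pos.le; positivity
  refine ⟨K * A ^ 2 + K * C₁ + Kt, 1 / (A + 1), by positivity, by positivity, ?_⟩
  intro n hn δx hnδx i hi δt hδt hδtε
  have hδx1 : δx ^ 2 ≤ 1 := pow_le_one₀ (pos_of_natCast_mul_eq_one hnδx).le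
    (by simpa using (natCast_mul_mem_Icc hnδx (j := 1) (by omega)).2)
  have hx := natCast_mul_mem_Icc hnδx hi
  obtain ⟨a, ha, hab⟩ := P.exists_hPlus_eq_mul_exp (by simpa [S.Dv_zero] using (S.boundary 0 h0).1)
    (by simpa [S.Dv_zero] using (S.boundary 0 h0).2) hn hnδx hi δt
  have hρ := P.abs_rate_le hx
  simp only [S.Dh_zero, S.Dv_zero] at ha hab hρ
  set ρ := Dv 0 1 0 (i * δx) + v 0 (i * δx) * (Dh 0 1 0 (i * δx) / h 0 (i * δx))
  have haA : |a| ≤ A := by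
    have := abs_sub_abs_le_abs_sub a (-ρ)
    rw [abs_neg, sub_neg_eq_add] at this
    nlinarith [mul_le_mul_of_nonneg_left hδx1 hC₁]
  have hA1 : δt * A ≤ 1 := by
    rw [le_div_iff₀ (by positivity)] at hδtε; nlinarith
  have hh0 : |h 0 (i * δx)| ≤ K := by simpa [S.Dh_zero] using P.abs_H_le 0 (by norm_num) _ hx
  rw [ha]
  refine (abs_mul_exp_sub_le (r := -ρ) hδt.1 haA hA1).trans ?_
  rw [show h 0 (i * δx) * -ρ = Dh 1 0 0 (i * δx) by rw [S.Dh_one_zero_eq hT hx]; ring,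
    sub_neg_eq_add]
  have e1 := mul_le_mul_of_nonneg_right hh0 (sq_nonneg (δt * A))
  have e2 := mul_le_mul (mul_le_mul_of_nonneg_right hh0 hδt.1) hab (abs_nonneg _)
    (mul_nonneg hK hδt.1)
  have e3 := (htay δt hδt _ hx).1
  have : 0 ≤ δt * δx ^ 2 := by have := hδt.1; positivity
  nlinarith [mul_nonneg hKt this, mul_nonneg (mul_nonneg hK (sq_nonneg A)) this,
    mul_nonneg (mul_nonneg hK hC₁) (sq_nonneg δt)]

theorem Dv_one_zero_eq (S : IsClassicalSolution μ T f h v Dh Dv) (hT : 0 ≤ T) {x : ℝ}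
    (hx : x ∈ Ioo (0 : ℝ) 1) :
    Dv 1 0 0 x = μ * Dv 0 2 0 x + μ * Dv 0 1 0 x * (Dh 0 1 0 x / h 0 x)
      - v 0 x * Dv 0 1 0 x - Dh 0 1 0 x + f 0 := by
  have h0 : (0 : ℝ) ∈ Icc 0 T := ⟨le_rfl, hT⟩
  have hmom := S.momentum_eq 0 h0 x hx
  have hmass := S.mass_eq 0 h0 x (Ioo_subset_Icc_self hx)
  have := (S.pos 0 h0 x (Ioo_subset_Icc_self hx)).ne'
  field_simp
  linear_combination hmom - v 0 x * hmass

theorem exists_vPlus_error (S : IsClassicalSolution μ T f h v Dh Dv) (hT : 0 ≤ T) :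
    ∃ C, 0 ≤ C ∧ ∀ n : ℕ, 2 ≤ n → ∀ δx : ℝ, n * δx = 1 → ∀ i ≤ n, ∀ δt ∈ Icc 0 T,
      |vPlus δt δx μ (f 0) n (fun j => h 0 (j * δx)) (fun j => v 0 (j * δx)) i - v δt (i * δx)|
        ≤ C * δt * (δt + δx ^ 2) := by
  obtain ⟨K, m, P⟩ := S.exists_smoothProfile hT
  obtain ⟨Kt, hKt, htay⟩ := S.exists_abs_time_taylor_le
  have hK := P.nonneg
  set C₂ := 2 * |μ| * K + |μ| * K * (2 * logDerivBound K m + K / m) + K ^ 2 + K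
  have hC₂ : 0 ≤ C₂ := by
    have := P.logDerivBound_nonneg; have := div_nonneg hK P.pos.le; positivity
  refine ⟨C₂ + Kt, by positivity, fun n hn δx hnδx i hi δt hδt => ?_⟩
  have hδx := pos_of_natCast_mul_eq_one hnδx
  have hC : 0 ≤ (C₂ + Kt) * δt * (δt + δx ^ 2) := by have := hδt.1; positivity
  rcases Nat.eq_zero_or_pos i with rfl | hi0
  · simpa [vPlus, (S.boundary δt hδt).1] using hC
  rcases hi.eq_or_lt with rfl | hin
  · simpa [vPlus, hnδx, (S.boundary δt hδt).2] using hC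
  have hx : (i : ℝ) * δx ∈ Ioo (0 : ℝ) 1 :=
    ⟨by positivity, hnδx ▸ mul_lt_mul_of_pos_right (by exact_mod_cast hin) hδx⟩
  have hv := P.abs_vPlus_sub_le hnδx hi0 hin δt μ (f 0)
  simp only [S.Dh_zero, S.Dv_zero, ← S.Dv_one_zero_eq hT hx] at hv
  have ht := (htay δt hδt _ (Ioo_subset_Icc_self hx)).2
  rw [abs_of_nonneg hδt.1] at hv
  calc _ ≤ |vPlus δt δx μ (f 0) n (fun j => h 0 (j * δx)) (fun j => v 0 (j * δx)) i
          - v 0 (i * δx) - δt * Dv 1 0 0 (i * δx)|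
        + |v δt (i * δx) - v 0 (i * δx) - δt * Dv 1 0 0 (i * δx)| := by
        refine le_of_eq_of_le ?_ (abs_sub _ _)
        congr 1; ring
    _ ≤ _ := by
        have : 0 ≤ δt * δx ^ 2 := by have := hδt.1; positivity
        nlinarith [mul_nonneg hKt this, mul_nonneg hC₂ (sq_nonneg δt)]

end IsClassicalSolution

theorem reduced_order_scheme_consistency_general
    (σ q k γ β lam μ T : ℝ)
    (hT : 0 < T)
    (ξ w ζ z f : ℝ → ℝ)
    (h v : ℝ → ℝ → ℝ)
    (Dh Dv : ℕ → ℕ → ℝ → ℝ → ℝ)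
    (hDh0 : Dh 0 0 = h) (hDv0 : Dv 0 0 = v)
    (h_pos : ∀ t ∈ Icc 0 T, ∀ x ∈ Icc (0:ℝ) 1, 0 < h t x)
    -- existence of all time partial derivatives up to order 2
    (hDh_t : ∀ j < 2, ∀ i ≤ 4, ∀ t ∈ Icc 0 T, ∀ x ∈ Icc (0:ℝ) 1,
      HasDerivWithinAt (fun s => Dh j i s x) (Dh (j + 1) i t x) (Icc 0 T) t)
    (hDv_t : ∀ j < 2, ∀ i ≤ 4, ∀ t ∈ Icc 0 T, ∀ x ∈ Icc (0:ℝ) 1,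
      HasDerivWithinAt (fun s => Dv j i s x) (Dv (j + 1) i t x) (Icc 0 T) t)
    -- existence of all spatial partial derivatives up to order 4
    (hDh_x : ∀ j ≤ 2, ∀ i < 4, ∀ t ∈ Icc 0 T, ∀ x ∈ Icc (0:ℝ) 1,
      HasDerivWithinAt (fun y => Dh j i t y) (Dh j (i + 1) t x) (Icc 0 1) x)
    (hDv_x : ∀ j ≤ 2, ∀ i < 4, ∀ t ∈ Icc 0 T, ∀ x ∈ Icc (0:ℝ) 1,
      HasDerivWithinAt (fun y => Dv j i t y) (Dv j (i + 1) t x) (Icc 0 1) x)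
    -- continuity of all these partial derivatives
    (hDh_c : ∀ j ≤ 2, ∀ i ≤ 4,
      ContinuousOn (fun p : ℝ × ℝ => Dh j i p.1 p.2) (Icc 0 T ×ˢ Icc (0:ℝ) 1))
    (hDv_c : ∀ j ≤ 2, ∀ i ≤ 4,
      ContinuousOn (fun p : ℝ × ℝ => Dv j i p.1 p.2) (Icc 0 T ×ˢ Icc (0:ℝ) 1))
    -- the continuity equation h_t + (h v)_x = 0
    (pde_mass : ∀ t ∈ Icc 0 T, ∀ x ∈ Icc (0:ℝ) 1,
      Dh 1 0 t x + (Dh 0 1 t x * v t x + h t x * Dv 0 1 t x) = 0)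
    -- the momentum equation (hv)_t + (hv² + h²/2)_x = μ(h v_x)_x + h f
    (pde_mom : ∀ t ∈ Icc 0 T, ∀ x ∈ Ioo (0:ℝ) 1,
      Dh 1 0 t x * v t x + h t x * Dv 1 0 t x
        + (Dh 0 1 t x * (v t x) ^ 2 + 2 * h t x * v t x * Dv 0 1 t x
            + h t x * Dh 0 1 t x)
      = μ * (Dh 0 1 t x * Dv 0 1 t x + h t x * Dv 0 2 t x) + h t x * f t)
    (bc : ∀ t ∈ Icc 0 T, v t 0 = 0 ∧ v t 1 = 0)
    -- tank dynamics, reduced-order observer and filter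
    (hξ : ∀ t ∈ Icc 0 T, HasDerivWithinAt ξ (w t) (Icc 0 T) t)
    (hw : ∀ t ∈ Icc 0 T, HasDerivWithinAt w (-(f t)) (Icc 0 T) t)
    (hζ : ∀ t ∈ Icc 0 T,
      HasDerivWithinAt ζ (-γ * ζ t - γ ^ 2 * ξ t - f t) (Icc 0 T) t)
    (hz : ∀ t ∈ Icc 0 T, HasDerivWithinAt z
      (f t - 1 / 2 * ((h t 1) ^ 2 - (h t 0) ^ 2)
        - β * (z t - μ * (h t 1 - h t 0))) (Icc 0 T) t)
    -- the output feedback law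
    (hf : ∀ t ∈ Icc 0 T, f t = -σ * (2 * lam * z t + (1 - 2 * lam) * μ * (h t 1 - h t 0)
        - q * (ζ t + (γ + k) * ξ t))) :
    ∃ Mbar > (0:ℝ), ∃ ε > (0:ℝ), ∀ n : ℕ, 2 ≤ n →
      ∀ δt : ℝ, 0 < δt → δt < T → δt ≤ ε → (1:ℝ) / n ≤ ε →
      ∀ i ≤ n,
        let δx : ℝ := 1 / n
        let hh : ℕ → ℝ := fun j => h 0 (j * δx)
        let vv : ℕ → ℝ := fun j => v 0 (j * δx)
        let fd : ℝ := -σ * (2 * lam * z 0 + (1 - 2 * lam) * μ * (hh n - hh 0)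
          - q * (ζ 0 + (γ + k) * ξ 0))
        let ξp : ℝ := ξ 0 + δt * w 0 - δt ^ 2 / 2 * fd
        let wp : ℝ := w 0 - δt * fd
        let ζp : ℝ := wp - γ * ξp + Real.exp (-γ * δt) * (ζ 0 - w 0 + γ * ξ 0)
        let zp : ℝ := z 0 + δt * (fd - 1 / 2 * ((hh n) ^ 2 - (hh 0) ^ 2)
          - β * (z 0 - μ * (hh n - hh 0)))
        |ξp - ξ δt| + |wp - w δt| + |zp - z δt| + |ζp - ζ δt|
          + (|hPlus δt δx n hh vv i - h δt (i * δx)|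
              + |vPlus δt δx μ fd n hh vv i - v δt (i * δx)|)
        ≤ Mbar * δt * (δt + δx ^ 2) := by
  have S : IsClassicalSolution μ T f h v Dh Dv :=
    ⟨hDh0, hDv0, h_pos, hDh_t, hDv_t, hDh_x, hDv_x, hDh_c, hDv_c, pde_mass, pde_mom, bc⟩
  have h0 : (0 : ℝ) ∈ Icc 0 T := ⟨le_rfl, hT.le⟩
  have x₀ : (0 : ℝ) ∈ Icc (0 : ℝ) 1 := ⟨le_rfl, zero_le_one⟩
  have x₁ : (1 : ℝ) ∈ Icc (0 : ℝ) 1 := ⟨zero_le_one, le_rfl⟩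
  obtain ⟨Co, hCo, hobs⟩ := exists_closed_loop_step_error hξ hw hζ hz (S.hasDerivWithinAt_h_t x₀)
    (S.continuousOn_Dh_t x₀) (S.hasDerivWithinAt_h_t x₁) (S.continuousOn_Dh_t x₁) hf
  obtain ⟨Ch, ε, hCh, hε, hherr⟩ := S.exists_hPlus_error hT.le
  obtain ⟨Cv, hCv, hverr⟩ := S.exists_vPlus_error hT.le
  refine ⟨Co + Ch + Cv + 1, by positivity, ε, hε, fun n hn δt hδt hδtT hδtε _ i hi => ?_⟩
  intro δx hh vv fd ξp wp ζp zp
  have hnδx : (n : ℝ) * δx = 1 := by simp only [δx]; field_simp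
  have hδt' : δt ∈ Icc 0 T := ⟨hδt.le, hδtT.le⟩
  have hhn : hh n = h 0 1 := by simp only [hh, hnδx]
  have hh0 : hh 0 = h 0 0 := by simp [hh]
  have hfd : fd = f 0 := by simp only [fd, hhn, hh0, hf 0 h0]
  have eo : |ξp - ξ δt| + |wp - w δt| + |zp - z δt| + |ζp - ζ δt| ≤ Co * δt ^ 2 := by
    simpa only [ξp, wp, ζp, zp, hfd, hhn, hh0] using hobs δt hδt'
  have eh := hherr n hn δx hnδx i hi δt hδt' hδtε
  have ev : |vPlus δt δx μ fd n hh vv i - v δt (i * δx)| ≤ Cv * δt * (δt + δx ^ 2) := by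
    rw [hfd]; exact hverr n hn δx hnδx i hi δt hδt'
  have hsq : δt ^ 2 ≤ δt * (δt + δx ^ 2) := by nlinarith [sq_nonneg δx]
  nlinarith [mul_le_mul_of_nonneg_left hsq hCo, mul_pos hδt (by positivity : 0 < δt + δx ^ 2)]

/-- Theorem 4 of the paper: one-step consistency, of order
`O(δt(δt + δx²))`, of the numerical discretization (6.1)-(6.3), (6.6)-(6.8) of
the viscous Saint-Venant system with `L = g = h* = m = 1` in closed loop with
the output feedback (6.6) based on the reduced-order observer.

The families `Dh j i` and `Dv j i` are the mixed partial derivatives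
`∂ₓ^i ∂ₜ^j h` and `∂ₓ^i ∂ₜ^j v` (one-sided at the boundary of
`[0,T] × [0,1]`): all of them with `j ≤ 2`, `i ≤ 4` exist and are continuous
on `[0,T] × [0,1]` ("classical smooth solution"). -/
theorem reduced_order_scheme_consistency
    (σ q k γ β lam μ T : ℝ)
    (hσ : 0 < σ) (hq : 0 < q) (hk : 0 < k) (hγ : 0 < γ) (hβ : 0 < β) (hμ : 0 < μ)
    (hlam : lam ∈ Icc (0:ℝ) 1) (hT : 0 < T)
    (ξ w ζ z f : ℝ → ℝ)
    (h v : ℝ → ℝ → ℝ)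
    (Dh Dv : ℕ → ℕ → ℝ → ℝ → ℝ)
    (hDh0 : Dh 0 0 = h) (hDv0 : Dv 0 0 = v)
    (h_pos : ∀ t ∈ Icc 0 T, ∀ x ∈ Icc (0:ℝ) 1, 0 < h t x)
    -- existence of all time partial derivatives up to order 2
    (hDh_t : ∀ j < 2, ∀ i ≤ 4, ∀ t ∈ Icc 0 T, ∀ x ∈ Icc (0:ℝ) 1,
      HasDerivWithinAt (fun s => Dh j i s x) (Dh (j + 1) i t x) (Icc 0 T) t)
    (hDv_t : ∀ j < 2, ∀ i ≤ 4, ∀ t ∈ Icc 0 T, ∀ x ∈ Icc (0:ℝ) 1,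
      HasDerivWithinAt (fun s => Dv j i s x) (Dv (j + 1) i t x) (Icc 0 T) t)
    -- existence of all spatial partial derivatives up to order 4
    (hDh_x : ∀ j ≤ 2, ∀ i < 4, ∀ t ∈ Icc 0 T, ∀ x ∈ Icc (0:ℝ) 1,
      HasDerivWithinAt (fun y => Dh j i t y) (Dh j (i + 1) t x) (Icc 0 1) x)
    (hDv_x : ∀ j ≤ 2, ∀ i < 4, ∀ t ∈ Icc 0 T, ∀ x ∈ Icc (0:ℝ) 1,
      HasDerivWithinAt (fun y => Dv j i t y) (Dv j (i + 1) t x) (Icc 0 1) x)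
    -- continuity of all these partial derivatives
    (hDh_c : ∀ j ≤ 2, ∀ i ≤ 4,
      ContinuousOn (fun p : ℝ × ℝ => Dh j i p.1 p.2) (Icc 0 T ×ˢ Icc (0:ℝ) 1))
    (hDv_c : ∀ j ≤ 2, ∀ i ≤ 4,
      ContinuousOn (fun p : ℝ × ℝ => Dv j i p.1 p.2) (Icc 0 T ×ˢ Icc (0:ℝ) 1))
    -- the continuity equation h_t + (h v)_x = 0
    (pde_mass : ∀ t ∈ Icc 0 T, ∀ x ∈ Icc (0:ℝ) 1,
      Dh 1 0 t x + (Dh 0 1 t x * v t x + h t x * Dv 0 1 t x) = 0)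
    -- the momentum equation (hv)_t + (hv² + h²/2)_x = μ(h v_x)_x + h f
    (pde_mom : ∀ t ∈ Icc 0 T, ∀ x ∈ Ioo (0:ℝ) 1,
      Dh 1 0 t x * v t x + h t x * Dv 1 0 t x
        + (Dh 0 1 t x * (v t x) ^ 2 + 2 * h t x * v t x * Dv 0 1 t x
            + h t x * Dh 0 1 t x)
      = μ * (Dh 0 1 t x * Dv 0 1 t x + h t x * Dv 0 2 t x) + h t x * f t)
    (bc : ∀ t ∈ Icc 0 T, v t 0 = 0 ∧ v t 1 = 0)
    (mass : ∀ t ∈ Icc 0 T, (∫ x in (0:ℝ)..1, h t x) = 1)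
    -- tank dynamics, reduced-order observer and filter
    (hξ : ∀ t ∈ Icc 0 T, HasDerivWithinAt ξ (w t) (Icc 0 T) t)
    (hw : ∀ t ∈ Icc 0 T, HasDerivWithinAt w (-(f t)) (Icc 0 T) t)
    (hζ : ∀ t ∈ Icc 0 T,
      HasDerivWithinAt ζ (-γ * ζ t - γ ^ 2 * ξ t - f t) (Icc 0 T) t)
    (hz : ∀ t ∈ Icc 0 T, HasDerivWithinAt z
      (f t - 1 / 2 * ((h t 1) ^ 2 - (h t 0) ^ 2)
        - β * (z t - μ * (h t 1 - h t 0))) (Icc 0 T) t)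
    -- the output feedback law
    (hf : ∀ t ∈ Icc 0 T, f t = -σ * (2 * lam * z t + (1 - 2 * lam) * μ * (h t 1 - h t 0)
        - q * (ζ t + (γ + k) * ξ t))) :
    ∃ Mbar > (0:ℝ), ∃ ε > (0:ℝ), ∀ n : ℕ, 2 ≤ n →
      ∀ δt : ℝ, 0 < δt → δt < T → δt ≤ ε → (1:ℝ) / n ≤ ε →
      ∀ i ≤ n,
        let δx : ℝ := 1 / n
        let hh : ℕ → ℝ := fun j => h 0 (j * δx)
        let vv : ℕ → ℝ := fun j => v 0 (j * δx)
        let fd : ℝ := -σ * (2 * lam * z 0 + (1 - 2 * lam) * μ * (hh n - hh 0)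
          - q * (ζ 0 + (γ + k) * ξ 0))
        let ξp : ℝ := ξ 0 + δt * w 0 - δt ^ 2 / 2 * fd
        let wp : ℝ := w 0 - δt * fd
        let ζp : ℝ := wp - γ * ξp + Real.exp (-γ * δt) * (ζ 0 - w 0 + γ * ξ 0)
        let zp : ℝ := z 0 + δt * (fd - 1 / 2 * ((hh n) ^ 2 - (hh 0) ^ 2)
          - β * (z 0 - μ * (hh n - hh 0)))
        |ξp - ξ δt| + |wp - w δt| + |zp - z δt| + |ζp - ζ δt|
          + (|hPlus δt δx n hh vv i - h δt (i * δx)|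
              + |vPlus δt δx μ fd n hh vv i - v δt (i * δx)|)
        ≤ Mbar * δt * (δt + δx ^ 2) :=
  reduced_order_scheme_consistency_general σ q k γ β lam μ T hT ξ w ζ z f h v Dh Dv hDh0 hDv0 h_pos
    hDh_t hDv_t hDh_x hDv_x hDh_c hDv_c pde_mass pde_mom bc hξ hw hζ hz hf
end

section
/- Let c', c ∈ ℝ with c' < c. Let ρ : [0,∞) → ℝ be continuous, and let Φ : [0,∞) → ℝ be continuous on [0,∞) and differentiable on (0,∞). Assume: (i) for every t > 0 with ρ(t) < c one has Φ'(t) ≤ 0; and (ii) for every t ≥ 0 with Φ(t) ≤ Φ(0) one has ρ(t) ≤ c'. Then ρ(t) ≤ c' and Φ(t) ≤ Φ(0) for all t ≥ 0. -/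
open Set
open Filter Topology Metric

/-- abstract barrier/continuity argument.  If the Lyapunov
functional `Φ` dissipates (`Φ' ≤ 0`) whenever the continuous quantity `ρ`
stays below the threshold `c`, and the sublevel set `{Φ ≤ Φ(0)}` forces
`ρ ≤ c' < c`, then `ρ(t) ≤ c'` and `Φ(t) ≤ Φ(0)` for all `t ≥ 0`. -/
theorem barrier_argument
    (c' c : ℝ) (hcc : c' < c) (ρ Φ : ℝ → ℝ)
    (ρ_cont : ContinuousOn ρ (Ici 0))
    (Φ_cont : ContinuousOn Φ (Ici 0))
    (Φ_diff : ∀ t ∈ Ioi (0:ℝ), DifferentiableAt ℝ Φ t)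
    (hdiss : ∀ t ∈ Ioi (0:ℝ), ρ t < c → deriv Φ t ≤ 0)
    (hsub : ∀ t ∈ Ici (0:ℝ), Φ t ≤ Φ 0 → ρ t ≤ c') :
    ∀ t ∈ Ici (0:ℝ), ρ t ≤ c' ∧ Φ t ≤ Φ 0 := by
  suffices h : ∀ t ∈ Ici (0:ℝ), Φ t ≤ Φ 0 by
    intro t ht
    exact ⟨hsub t ht (h t ht), h t ht⟩
  by_contra hcon
  push_neg at hcon
  obtain ⟨t0, ht0, hΦt0⟩ := hcon
  set S : Set ℝ := {t | 0 ≤ t ∧ ∀ s ∈ Icc 0 t, Φ s ≤ Φ 0} with hS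
  have h0S : (0:ℝ) ∈ S := by
    refine ⟨le_refl 0, ?_⟩
    intro s hs
    have : s = 0 := le_antisymm hs.2 hs.1
    simp [this]
  have hSub : S ⊆ Icc 0 t0 := by
    intro t htS
    refine ⟨htS.1, ?_⟩
    by_contra hlt
    push_neg at hlt
    exact absurd (htS.2 t0 ⟨ht0, hlt.le⟩) (not_le.mpr hΦt0)
  have hbdd : BddAbove S := ⟨t0, fun t ht => (hSub ht).2⟩
  set T := sSup S with hT
  have hTS1 : 0 ≤ T := le_csSup hbdd h0S
  have hTmem : ∀ s ∈ Ico (0:ℝ) T, Φ s ≤ Φ 0 := by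
    intro s hs
    obtain ⟨u, huS, hsu⟩ := exists_lt_of_lt_csSup ⟨0, h0S⟩ hs.2
    exact huS.2 s ⟨hs.1, hsu.le⟩
  have hΦT : Φ T ≤ Φ 0 := by
    rcases eq_or_lt_of_le hTS1 with h0T | h0T
    · simp [← h0T]
    · have hne : (𝓝[Ico (0:ℝ) T] T).NeBot := by
        apply mem_closure_iff_nhdsWithin_neBot.mp
        rw [closure_Ico h0T.ne]
        exact ⟨hTS1, le_refl T⟩
      have htend : Filter.Tendsto Φ (𝓝[Ico (0:ℝ) T] T) (𝓝 (Φ T)) :=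
        ((Φ_cont T hTS1).mono (Ico_subset_Icc_self.trans
          (Icc_subset_Ici_self))).tendsto
      exact le_of_tendsto htend (eventually_mem_nhdsWithin.mono fun s hs => hTmem s hs)
  -- On [0,T], Φ ≤ Φ 0 and hence ρ ≤ c'
  have hTIcc : ∀ s ∈ Icc (0:ℝ) T, Φ s ≤ Φ 0 := by
    intro s hs
    rcases eq_or_lt_of_le hs.2 with h | h
    · rw [h]; exact hΦT
    · exact hTmem s ⟨hs.1, h⟩
  have hρT : ρ T < c := lt_of_le_of_lt (hsub T hTS1 hΦT) hcc
  -- continuity of ρ at T gives δ > 0 with ρ < c near T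
  have hev : ∀ᶠ s in 𝓝[Ici (0:ℝ)] T, ρ s < c :=
    (ρ_cont T hTS1).eventually_lt_const hρT
  rw [Filter.eventually_iff, Metric.mem_nhdsWithin_iff] at hev
  obtain ⟨δ, hδ, hδρ⟩ := hev
  set b := T + δ / 2 with hb
  have hTb : T < b := by simp [hb]; linarith
  have hρb : ∀ s ∈ Icc (0:ℝ) b, ρ s < c := by
    intro s hs
    rcases le_or_gt s T with h | h
    · exact lt_of_le_of_lt (hsub s (mem_Ici.mpr hs.1) (hTIcc s ⟨hs.1, h⟩)) hcc
    · apply hδρ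
      refine ⟨?_, hs.1⟩
      have hs2 : s ≤ T + δ / 2 := hs.2
      rw [mem_ball, Real.dist_eq, abs_lt]
      constructor <;> linarith
  have hanti : AntitoneOn Φ (Icc 0 b) := by
    apply antitoneOn_of_deriv_nonpos (convex_Icc 0 b)
      (Φ_cont.mono (Icc_subset_Ici_self))
    · intro x hx
      rw [interior_Icc] at hx
      exact (Φ_diff x hx.1).differentiableWithinAt
    · intro x hx
      rw [interior_Icc] at hx
      exact hdiss x hx.1 (hρb x ⟨hx.1.le, hx.2.le⟩)
  have hbS : b ∈ S := by
    refine ⟨by linarith, fun s hs => ?_⟩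
    have := hanti (left_mem_Icc.mpr (by linarith)) hs hs.1
    simpa using this
  exact absurd (le_csSup hbdd hbS) (not_le.mpr hTb)
end
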